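/- arXiv:2211.07558 — 5 statements merged into one kernel-verified Lean document; each statement's English description precedes it below -/
import Mathlib

section
/- Let R be a norm on ℝ^p with dual norm R*(z) = sup{zᵀw : R(w) ≤ 1}, let L : ℝ^p → ℝ be convex and differentiable, let λ > 0, β* ∈ ℝ^p, r > 0, and let β̃ be a minimizer of β ↦ L(β) + λ·R(β) over the closed Euclidean ball {β : ‖β − β*‖₂ ≤ r}. Assume (deviation condition) R*(∇L(β*)) ≤ λ/2, and (restricted eigenvalue condition) there is α > 0 such that L(β* + u) − L(β*) − ∇L(β*)ᵀu ≥ α‖u‖₂² for every u with ‖u‖₂ ≤ r and R(u)/2 + R(β*) − R(β* + u) ≥ 0. Let Φ := sup{R(u)/‖u‖₂ : u ≠ 0, R(u)/2 + R(β*) − R(β* + u) ≥ 0} and assume Φ < ∞. Then the error vector v := β̃ − β* satisfies R(v)/2 + R(β*) − R(β* + v) ≥ 0, ‖v‖₂ ≤ 3λΦ/(2α), and R(v) ≤ 3λΦ²/(2α). -/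
open scoped RealInnerProductSpace

/-!
Everything follows from the basic inequality `L β̃ + λ R β̃ ≤ L β* + λ R β*` (minimality of `β̃`,
with `β*` feasible). Writing `v = β̃ - β*`, convexity bounds `L β̃ - L β*` below by `⟪∇L β*, v⟫`,
and the deviation condition bounds that below by `-(λ/2) R v`; this puts `v` in the cone. On the
cone the restricted eigenvalue condition turns the basic inequality into
`α ‖v‖² ≤ (3λ/2) R v ≤ (3λ/2) Φ ‖v‖`, which gives both bounds.
-/

theorem ConvexOn.le_sub_of_hasFDerivAt {E : Type*} [NormedAddCommGroup E] [NormedSpace ℝ E]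
    {f : E → ℝ} {f' : E →L[ℝ] ℝ} {s : Set E} {x y : E} (hf : ConvexOn ℝ s f)
    (hx : x ∈ s) (hy : y ∈ s) (hf' : HasFDerivAt f f' x) :
    f' (y - x) ≤ f y - f x := by
  have hline : HasDerivAt (f ∘ AffineMap.lineMap (k := ℝ) x y) (f' (y - x)) 0 := by
    refine HasFDerivAt.comp_hasDerivAt (0 : ℝ) ?_ AffineMap.hasDerivAt_lineMap
    rwa [AffineMap.lineMap_apply_zero]
  have hconv := hf.comp_affineMap (AffineMap.lineMap (k := ℝ) x y)
  have := hconv.le_slope_of_hasDerivAt (x := 0) (y := 1) (by simpa) (by simpa) one_pos hline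
  simpa [slope] using this

theorem le_div_of_mul_sq_le_mul {a b x : ℝ} (ha : 0 < a) (hb : 0 ≤ b) (hx : 0 ≤ x)
    (h : a * x ^ 2 ≤ b * x) : x ≤ b / a := by
  rcases hx.eq_or_lt with rfl | hx
  · exact div_nonneg hb ha.le
  · rw [le_div_iff₀ ha]
    nlinarith

namespace Seminorm

variable {E : Type*} [AddCommGroup E] [Module ℝ E] (N : Seminorm ℝ E) (ℓ : E →ₗ[ℝ] ℝ)

theorem le_mul_of_forall_le_one {c : ℝ} (h : ∀ w, N w ≤ 1 → ℓ w ≤ c) (v : E) :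
    ℓ v ≤ c * N v := by
  rcases (apply_nonneg N v).eq_or_lt with hNv | hNv
  · rw [← hNv, mul_zero]
    by_contra! hℓv
    have := h (((c + 1) / ℓ v) • v) (by rw [map_smul_eq_mul, ← hNv, mul_zero]; exact zero_le_one)
    rw [map_smul, smul_eq_mul, div_mul_cancel₀ _ hℓv.ne'] at this
    linarith
  · have hunit : N ((N v)⁻¹ • v) ≤ 1 := by
      rw [map_smul_eq_mul, norm_inv, Real.norm_of_nonneg hNv.le, inv_mul_cancel₀ hNv.ne']
    calc ℓ v = N v * ℓ ((N v)⁻¹ • v) := by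
          rw [map_smul, smul_eq_mul, mul_inv_cancel_left₀ hNv.ne']
      _ ≤ N v * c := mul_le_mul_of_nonneg_left (h _ hunit) hNv.le
      _ = c * N v := mul_comm _ _

theorem neg_mul_le_of_forall_le_one {c : ℝ} (h : ∀ w, N w ≤ 1 → ℓ w ≤ c) (v : E) :
    -(c * N v) ≤ ℓ v := by
  have := N.le_mul_of_forall_le_one ℓ h (-v)
  rwa [map_neg, map_neg_eq_map, neg_le] at this

variable {L : E → ℝ} {lam : ℝ} {βs βt : E}

theorem cone_condition_of_basic_inequality (hlam : 0 < lam)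
    (hdev : ∀ w, N w ≤ 1 → ℓ w ≤ lam / 2) (hlin : ℓ (βt - βs) ≤ L βt - L βs)
    (hbasic : L βt + lam * N βt ≤ L βs + lam * N βs) :
    0 ≤ N (βt - βs) / 2 + N βs - N βt := by
  have hdual := N.neg_mul_le_of_forall_le_one ℓ hdev (βt - βs)
  have : 0 ≤ lam * (N (βt - βs) / 2 + N βs - N βt) := by linarith
  exact (mul_nonneg_iff_of_pos_left hlam).mp this

theorem remainder_le_of_basic_inequality (hlam : 0 ≤ lam)
    (hdev : ∀ w, N w ≤ 1 → ℓ w ≤ lam / 2)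
    (hbasic : L βt + lam * N βt ≤ L βs + lam * N βs) :
    L βt - L βs - ℓ (βt - βs) ≤ 3 / 2 * lam * N (βt - βs) := by
  have hdual := N.neg_mul_le_of_forall_le_one ℓ hdev (βt - βs)
  have htri : N βs - N βt ≤ N (βt - βs) := by
    have := le_map_add_map_sub N βs βt
    rw [map_sub_rev] at this
    linarith
  linarith [mul_le_mul_of_nonneg_left htri hlam]

end Seminorm

theorem robust_penalized_error_bound_general {p : ℕ}
    (R : EuclideanSpace ℝ (Fin p) → ℝ)
    (hR_add : ∀ x y, R (x + y) ≤ R x + R y)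
    (hR_smul : ∀ (c : ℝ) (x), R (c • x) = |c| * R x)
    (L : EuclideanSpace ℝ (Fin p) → ℝ)
    (hL_conv : ConvexOn ℝ Set.univ L)
    (hL_diff : ∀ x, DifferentiableAt ℝ L x)
    (lam : ℝ) (hlam : 0 < lam)
    (βs βt : EuclideanSpace ℝ (Fin p)) (r : ℝ)
    -- `βt` is a minimizer of `L + lam • R` over the closed ball of radius `r` around `βs`
    (hfeas : ‖βt - βs‖ ≤ r)
    (hmin : ∀ β, ‖β - βs‖ ≤ r → L βt + lam * R βt ≤ L β + lam * R β)
    -- deviation condition: the dual norm of the gradient at `βs` is at most `lam/2`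
    (hdev : ∀ w, R w ≤ 1 → ⟪gradient L βs, w⟫ ≤ lam / 2)
    -- restricted eigenvalue condition on the cone intersected with the ball
    (α : ℝ) (hα : 0 < α)
    (hRE : ∀ u, ‖u‖ ≤ r → R u / 2 + R βs - R (βs + u) ≥ 0 →
      L (βs + u) - L βs - ⟪gradient L βs, u⟫ ≥ α * ‖u‖ ^ 2)
    -- `Φ` is an upper bound for the subspace compatibility constant of the cone
    (Φ : ℝ) (hΦ0 : 0 ≤ Φ)
    (hΦ : ∀ u, u ≠ 0 → R u / 2 + R βs - R (βs + u) ≥ 0 → R u ≤ Φ * ‖u‖) :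
    R (βt - βs) / 2 + R βs - R (βs + (βt - βs)) ≥ 0 ∧
    ‖βt - βs‖ ≤ 3 * lam * Φ / (2 * α) ∧
    R (βt - βs) ≤ 3 * lam * Φ ^ 2 / (2 * α) := by
  let N : Seminorm ℝ (EuclideanSpace ℝ (Fin p)) :=
    Seminorm.of R hR_add fun c x => by rw [hR_smul, Real.norm_eq_abs]
  let ℓ := innerₛₗ ℝ (gradient L βs)
  have hlin : ℓ (βt - βs) ≤ L βt - L βs :=
    hL_conv.le_sub_of_hasFDerivAt trivial trivial (hL_diff βs).hasGradientAt.hasFDerivAt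
  have hbasic : L βt + lam * R βt ≤ L βs + lam * R βs :=
    hmin βs (by simpa using (norm_nonneg _).trans hfeas)
  have hcone := N.cone_condition_of_basic_inequality ℓ hlam hdev hlin hbasic
  set v := βt - βs
  have hβt : βs + v = βt := add_sub_cancel βs βt
  have hRΦ : R v ≤ Φ * ‖v‖ := by
    rcases eq_or_ne v 0 with hv | hv
    · rw [hv, norm_zero, mul_zero]
      exact (map_zero N).le
    · exact hΦ v hv (by rwa [hβt])
  have hquad : α * ‖v‖ ^ 2 ≤ 3 / 2 * lam * Φ * ‖v‖ :=
    calc α * ‖v‖ ^ 2 ≤ L βt - L βs - ℓ v := hβt ▸ hRE v hfeas (by rwa [hβt])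
      _ ≤ 3 / 2 * lam * R v := N.remainder_le_of_basic_inequality ℓ hlam.le hdev hbasic
      _ ≤ 3 / 2 * lam * Φ * ‖v‖ := by rw [mul_assoc _ Φ]; gcongr
  have hnorm : ‖v‖ ≤ 3 * lam * Φ / (2 * α) := by
    convert le_div_of_mul_sq_le_mul hα (by positivity) (norm_nonneg v) hquad using 1
    ring
  refine ⟨by rwa [hβt], hnorm, ?_⟩
  calc R v ≤ Φ * ‖v‖ := hRΦ
    _ ≤ Φ * (3 * lam * Φ / (2 * α)) := mul_le_mul_of_nonneg_left hnorm hΦ0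
    _ = 3 * lam * Φ ^ 2 / (2 * α) := by ring

/-- **Deterministic error bound for the locally constrained penalized robust estimator.**
If the deviation condition `R*(∇L(β*)) ≤ λ/2` and the restricted eigenvalue condition hold,
then the error vector `v = β̃ - β*` lies in the anti-concentration cone and satisfies
`‖v‖₂ ≤ 3λΦ/(2α)` and `R(v) ≤ 3λΦ²/(2α)`. -/
theorem robust_penalized_error_bound {p : ℕ}
    (R : EuclideanSpace ℝ (Fin p) → ℝ)
    (hR_add : ∀ x y, R (x + y) ≤ R x + R y)
    (hR_smul : ∀ (c : ℝ) (x), R (c • x) = |c| * R x)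
    (hR_pos : ∀ x, x ≠ 0 → 0 < R x)
    (L : EuclideanSpace ℝ (Fin p) → ℝ)
    (hL_conv : ConvexOn ℝ Set.univ L)
    (hL_diff : ∀ x, DifferentiableAt ℝ L x)
    (lam : ℝ) (hlam : 0 < lam)
    (βs βt : EuclideanSpace ℝ (Fin p)) (r : ℝ) (hr : 0 < r)
    -- `βt` is a minimizer of `L + lam • R` over the closed ball of radius `r` around `βs`
    (hfeas : ‖βt - βs‖ ≤ r)
    (hmin : ∀ β, ‖β - βs‖ ≤ r → L βt + lam * R βt ≤ L β + lam * R β)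
    -- deviation condition: the dual norm of the gradient at `βs` is at most `lam/2`
    (hdev : ∀ w, R w ≤ 1 → ⟪gradient L βs, w⟫ ≤ lam / 2)
    -- restricted eigenvalue condition on the cone intersected with the ball
    (α : ℝ) (hα : 0 < α)
    (hRE : ∀ u, ‖u‖ ≤ r → R u / 2 + R βs - R (βs + u) ≥ 0 →
      L (βs + u) - L βs - ⟪gradient L βs, u⟫ ≥ α * ‖u‖ ^ 2)
    -- `Φ` is an upper bound for the subspace compatibility constant of the cone
    (Φ : ℝ) (hΦ0 : 0 ≤ Φ)
    (hΦ : ∀ u, u ≠ 0 → R u / 2 + R βs - R (βs + u) ≥ 0 → R u ≤ Φ * ‖u‖) :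
    R (βt - βs) / 2 + R βs - R (βs + (βt - βs)) ≥ 0 ∧
    ‖βt - βs‖ ≤ 3 * lam * Φ / (2 * α) ∧
    R (βt - βs) ≤ 3 * lam * Φ ^ 2 / (2 * α) :=
  robust_penalized_error_bound_general R hR_add hR_smul L hL_conv hL_diff lam hlam βs βt r hfeas
    hmin hdev α hα hRE Φ hΦ0 hΦ
end

section
/- Let R be a norm on ℝ^p with dual norm R*(z) = sup{zᵀw : R(w) ≤ 1}, let L : ℝ^p → ℝ be convex and differentiable, let λ > 0, β* ∈ ℝ^p, r > 0, and let β̃ be a minimizer of β ↦ L(β) + λ·R(β) over the closed Euclidean ball {β : ‖β − β*‖₂ ≤ r}. If R*(∇L(β*)) ≤ λ/2, then the error vector v := β̃ − β* satisfies 0 ≤ L(β̃) − L(β*) − ∇L(β*)ᵀv ≤ λ(R(β*) − R(β̃)) + (λ/2)·R(v), and consequently R(v)/2 + R(β*) − R(β* + v) ≥ 0. -/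
open scoped RealInnerProductSpace

/-! Convexity of `L` gives the lower bound. Comparing `β̃` with the feasible point `β*` gives
`L(β̃) - L(β*) ≤ λ (R(β*) - R(β̃))`, and the deviation condition bounds `-∇L(β*)ᵀv` by
`(λ/2) R(v)`, which yields the upper bound. Chaining the two bounds gives
`0 ≤ λ (R(v)/2 + R(β*) - R(β̃))`, and dividing by `λ > 0` places `v` in the cone. -/

/-- Restricting `f` to the segment `[x, y]` reduces this to the one-variable fact that the
derivative of a convex function at `0` is at most its slope over `[0, 1]`. -/
theorem ConvexOn.apply_sub_le_of_hasFDerivAt {E : Type*} [NormedAddCommGroup E] [NormedSpace ℝ E]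
    {f : E → ℝ} {f' : E →L[ℝ] ℝ} {x : E} (hf : ConvexOn ℝ Set.univ f) (hf' : HasFDerivAt f f' x)
    (y : E) : f' (y - x) ≤ f y - f x := by
  set g : ℝ →ᵃ[ℝ] E := AffineMap.lineMap x y
  have hline : ConvexOn ℝ Set.univ (f ∘ g) := hf.comp_affineMap g
  have hderiv : HasDerivAt (f ∘ g) (f' (y - x)) 0 :=
    hf'.comp_hasDerivAt_of_eq 0 AffineMap.hasDerivAt_lineMap (AffineMap.lineMap_apply_zero x y).symm
  simpa [g, slope_def_field] using
    hline.le_slope_of_hasDerivAt (Set.mem_univ 0) (Set.mem_univ 1) one_pos hderiv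

theorem ConvexOn.inner_gradient_sub_le {E : Type*} [NormedAddCommGroup E]
    [InnerProductSpace ℝ E] [CompleteSpace E] {f : E → ℝ} {x : E} (hf : ConvexOn ℝ Set.univ f)
    (hfx : DifferentiableAt ℝ f x) (y : E) : ⟪gradient f x, y - x⟫ ≤ f y - f x :=
  hf.apply_sub_le_of_hasFDerivAt hfx.hasGradientAt.hasFDerivAt y

theorem inner_le_mul_of_forall_le_one {E : Type*} [NormedAddCommGroup E] [InnerProductSpace ℝ E]
    {R : E → ℝ} (hR_smul : ∀ (c : ℝ) (x : E), R (c • x) = |c| * R x)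
    (hR_pos : ∀ x, x ≠ 0 → 0 < R x) {g : E} {c : ℝ} (h : ∀ w, R w ≤ 1 → ⟪g, w⟫ ≤ c) (w : E) :
    ⟪g, w⟫ ≤ c * R w := by
  rcases eq_or_ne w 0 with rfl | hw
  · have hR_zero : R 0 = 0 := by simpa using hR_smul 0 0
    simp [hR_zero]
  have hRw := hR_pos w hw
  have hunit : R ((R w)⁻¹ • w) ≤ 1 := by
    rw [hR_smul, abs_of_pos (inv_pos.2 hRw), inv_mul_cancel₀ hRw.ne']
  have := h _ hunit
  rwa [real_inner_smul_right, inv_mul_le_iff₀ hRw, mul_comm] at this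

theorem error_vector_in_cone_general {p : ℕ}
    (R : EuclideanSpace ℝ (Fin p) → ℝ)
    (hR_smul : ∀ (c : ℝ) (x), R (c • x) = |c| * R x)
    (hR_pos : ∀ x, x ≠ 0 → 0 < R x)
    (L : EuclideanSpace ℝ (Fin p) → ℝ)
    (hL_conv : ConvexOn ℝ Set.univ L)
    (hL_diff : ∀ x, DifferentiableAt ℝ L x)
    (lam : ℝ) (hlam : 0 < lam)
    (βs βt : EuclideanSpace ℝ (Fin p)) (r : ℝ) (hr : 0 < r)
    -- `βt` is a minimizer of `L + lam • R` over the closed ball of radius `r` around `βs`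
    (hmin : ∀ β, ‖β - βs‖ ≤ r → L βt + lam * R βt ≤ L β + lam * R β)
    -- deviation condition: the dual norm of the gradient at `βs` is at most `lam/2`
    (hdev : ∀ w, R w ≤ 1 → ⟪gradient L βs, w⟫ ≤ lam / 2) :
    (0 ≤ L βt - L βs - ⟪gradient L βs, βt - βs⟫ ∧
      L βt - L βs - ⟪gradient L βs, βt - βs⟫ ≤
        lam * (R βs - R βt) + (lam / 2) * R (βt - βs)) ∧
    R (βt - βs) / 2 + R βs - R (βs + (βt - βs)) ≥ 0 := by
  set v := βt - βs
  have hlow : 0 ≤ L βt - L βs - ⟪gradient L βs, v⟫ :=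
    sub_nonneg.2 (hL_conv.inner_gradient_sub_le (hL_diff βs) βt)
  have hcompare : L βt + lam * R βt ≤ L βs + lam * R βs := hmin βs (by simpa using hr.le)
  have hdual : ⟪gradient L βs, -v⟫ ≤ lam / 2 * R (-v) :=
    inner_le_mul_of_forall_le_one hR_smul hR_pos hdev (-v)
  rw [inner_neg_right, show R (-v) = R v by simpa using hR_smul (-1) v] at hdual
  have hup : L βt - L βs - ⟪gradient L βs, v⟫ ≤ lam * (R βs - R βt) + lam / 2 * R v := by
    linarith
  refine ⟨⟨hlow, hup⟩, ?_⟩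
  have hscaled : 0 ≤ lam * (R v / 2 + R βs - R βt) := by linarith
  rw [add_sub_cancel]
  exact (mul_nonneg_iff_of_pos_left hlam).1 hscaled

/-- **The error vector of the penalized robust estimator lies in the anti-concentration cone.**
Under the deviation condition `R*(∇L(β*)) ≤ λ/2`, the error `v = β̃ - β*` satisfies the basic
inequality `0 ≤ L(β̃) - L(β*) - ∇L(β*)ᵀv ≤ λ(R(β*) - R(β̃)) + (λ/2)R(v)` and hence
`R(v)/2 + R(β*) - R(β* + v) ≥ 0`. -/
theorem error_vector_in_cone {p : ℕ}
    (R : EuclideanSpace ℝ (Fin p) → ℝ)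
    (hR_add : ∀ x y, R (x + y) ≤ R x + R y)
    (hR_smul : ∀ (c : ℝ) (x), R (c • x) = |c| * R x)
    (hR_pos : ∀ x, x ≠ 0 → 0 < R x)
    (L : EuclideanSpace ℝ (Fin p) → ℝ)
    (hL_conv : ConvexOn ℝ Set.univ L)
    (hL_diff : ∀ x, DifferentiableAt ℝ L x)
    (lam : ℝ) (hlam : 0 < lam)
    (βs βt : EuclideanSpace ℝ (Fin p)) (r : ℝ) (hr : 0 < r)
    -- `βt` is a minimizer of `L + lam • R` over the closed ball of radius `r` around `βs`
    (hfeas : ‖βt - βs‖ ≤ r)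
    (hmin : ∀ β, ‖β - βs‖ ≤ r → L βt + lam * R βt ≤ L β + lam * R β)
    -- deviation condition: the dual norm of the gradient at `βs` is at most `lam/2`
    (hdev : ∀ w, R w ≤ 1 → ⟪gradient L βs, w⟫ ≤ lam / 2) :
    (0 ≤ L βt - L βs - ⟪gradient L βs, βt - βs⟫ ∧
      L βt - L βs - ⟪gradient L βs, βt - βs⟫ ≤
        lam * (R βs - R βt) + (lam / 2) * R (βt - βs)) ∧
    R (βt - βs) / 2 + R βs - R (βs + (βt - βs)) ≥ 0 :=
  error_vector_in_cone_general R hR_smul hR_pos L hL_conv hL_diff lam hlam βs βt r hr hmin hdev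
end

section
/- Fix n ≥ 1, b_M > 0, T > 0, α ≥ 0 and β* ∈ ℝ^p. Let x_1,…,x_n ∈ ℝ^p, ε_1,…,ε_n ∈ ℝ, and set y_i = x_iᵀβ* + ε_i. Let w : ℝ^p → [0,1] satisfy ‖w(x)x‖₂ ≤ b_M for all x ∈ ℝ^p, and let ℓ : ℝ → ℝ be convex and differentiable with ℓ(a) − ℓ(b) − ℓ′(b)(a − b) ≥ α(a − b)² for all a, b ∈ [−T, T]. Define the robust empirical loss L_n(β) = (1/n)∑_{i=1}^n w(x_i)·ℓ(w(x_i)(y_i − x_iᵀβ)). Then for every β ∈ ℝ^p with ‖β − β*‖₂ ≤ T/(2b_M), the Taylor remainder satisfies L_n(β) − L_n(β*) − ∇L_n(β*)ᵀ(β − β*) ≥ (α/n)·∑_{i=1}^n w(x_i)³·(x_iᵀ(β − β*))²·1{|ε_i| ≤ T/2}. -/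
/-!
Each summand of the Taylor remainder is `w(xᵢ)` times the Bregman divergence of `ℓ` between the
weighted residuals `w(xᵢ)(εᵢ - xᵢᵀ(β - β*))` and `w(xᵢ)εᵢ`. The divergence is nonnegative by
convexity. When `|εᵢ| ≤ T/2`, both residuals lie in `[-T, T]`, because by Cauchy–Schwarz the
perturbation `w(xᵢ)xᵢᵀ(β - β*)` is at most `b_M ‖β - β*‖ ≤ T/2`; so the curvature bound applies
and yields `α w(xᵢ)² (xᵢᵀ(β - β*))²`.
-/

open scoped RealInnerProductSpace

noncomputable def robustLoss {p : ℕ} (n : ℕ) (w : EuclideanSpace ℝ (Fin p) → ℝ)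
    (ℓ : ℝ → ℝ) (x : Fin n → EuclideanSpace ℝ (Fin p)) (y : Fin n → ℝ)
    (β : EuclideanSpace ℝ (Fin p)) : ℝ :=
  (n : ℝ)⁻¹ * ∑ i, w (x i) * ℓ (w (x i) * (y i - ⟪x i, β⟫))

noncomputable def bregmanDivergence (f : ℝ → ℝ) (a b : ℝ) : ℝ :=
  f a - f b - deriv f b * (a - b)

theorem ConvexOn.bregmanDivergence_nonneg {S : Set ℝ} {f : ℝ → ℝ} (hf : ConvexOn ℝ S f)
    {a b : ℝ} (ha : a ∈ S) (hb : b ∈ S) (hfb : DifferentiableAt ℝ f b) :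
    0 ≤ bregmanDivergence f a b := by
  rw [bregmanDivergence, sub_sub, sub_nonneg]
  rcases lt_trichotomy a b with hab | rfl | hab
  · have := hf.slope_le_deriv ha hb hab hfb
    rw [slope_def_field, div_le_iff₀ (sub_pos.mpr hab)] at this
    linarith
  · simp
  · have := hf.deriv_le_slope hb ha hab hfb
    rw [slope_def_field, le_div_iff₀ (sub_pos.mpr hab)] at this
    linarith

theorem le_mul_bregmanDivergence {ℓ : ℝ → ℝ} {T α : ℝ}
    (hℓ_conv : ConvexOn ℝ Set.univ ℓ)
    (hℓ_curv : ∀ a b : ℝ, a ∈ Set.Icc (-T) T → b ∈ Set.Icc (-T) T →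
      α * (a - b) ^ 2 ≤ bregmanDivergence ℓ a b)
    {w e t : ℝ} (hℓ_diff : DifferentiableAt ℝ ℓ (w * e)) (hw0 : 0 ≤ w) (hw1 : w ≤ 1)
    (hwt : |w * t| ≤ T / 2) :
    α * (w ^ 3 * t ^ 2 * (if |e| ≤ T / 2 then (1 : ℝ) else 0)) ≤
      w * bregmanDivergence ℓ (w * (e - t)) (w * e) := by
  split_ifs with he
  · have hwe : |w * e| ≤ T / 2 := by
      rw [abs_mul, abs_of_nonneg hw0]
      nlinarith [abs_nonneg e]
    have hb : w * e ∈ Set.Icc (-T) T := by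
      rw [Set.mem_Icc, ← abs_le]; linarith [abs_nonneg (w * e)]
    have ha : w * (e - t) ∈ Set.Icc (-T) T := by
      rw [Set.mem_Icc, ← abs_le, mul_sub]
      linarith [abs_sub (w * e) (w * t)]
    calc α * (w ^ 3 * t ^ 2 * 1) = w * (α * (w * (e - t) - w * e) ^ 2) := by ring
      _ ≤ w * bregmanDivergence ℓ (w * (e - t)) (w * e) :=
        mul_le_mul_of_nonneg_left (hℓ_curv _ _ ha hb) hw0
  · rw [mul_zero, mul_zero]
    exact mul_nonneg hw0 (hℓ_conv.bregmanDivergence_nonneg trivial trivial hℓ_diff)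

section RobustLoss

variable {p n : ℕ} {w : EuclideanSpace ℝ (Fin p) → ℝ} {ℓ : ℝ → ℝ}
  {x : Fin n → EuclideanSpace ℝ (Fin p)} {y : Fin n → ℝ}

theorem hasGradientAt_robustLoss {β₀ : EuclideanSpace ℝ (Fin p)}
    (hℓ : ∀ i, DifferentiableAt ℝ ℓ (w (x i) * (y i - ⟪x i, β₀⟫))) :
    HasGradientAt (robustLoss n w ℓ x y)
      (-((n : ℝ)⁻¹ • ∑ i, (w (x i) ^ 2 * deriv ℓ (w (x i) * (y i - ⟪x i, β₀⟫))) • x i)) β₀ := by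
  have hterm (i : Fin n) := (((hℓ i).hasDerivAt.comp_hasFDerivAt β₀
    ((((innerSL ℝ (x i)).hasFDerivAt).const_sub (y i)).const_mul (w (x i)))).const_mul (w (x i)))
  have hsum := (HasFDerivAt.sum (u := Finset.univ) fun i _ ↦ hterm i).const_mul ((n : ℝ)⁻¹)
  rw [hasGradientAt_iff_hasFDerivAt]
  refine (hsum.congr_of_eventuallyEq (.of_forall fun β ↦ ?_)).congr_fderiv ?_
  · simp only [robustLoss, Finset.sum_apply, Function.comp_apply, innerSL_apply_apply]
  · ext v
    simp only [smul_neg, Finset.sum_neg_distrib, neg_apply, smul_apply, sum_apply,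
      innerSL_apply_apply, smul_eq_mul, Finset.mul_sum, map_neg, map_smul, map_sum,
      InnerProductSpace.toDual_apply_apply, neg_inj]
    exact Finset.sum_congr rfl fun i _ ↦ by ring

theorem robustLoss_sub_sub_inner_gradient {β β₀ : EuclideanSpace ℝ (Fin p)}
    (hℓ : ∀ i, DifferentiableAt ℝ ℓ (w (x i) * (y i - ⟪x i, β₀⟫))) :
    robustLoss n w ℓ x y β - robustLoss n w ℓ x y β₀ -
        ⟪gradient (robustLoss n w ℓ x y) β₀, β - β₀⟫ =
      (n : ℝ)⁻¹ * ∑ i, w (x i) *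
        bregmanDivergence ℓ (w (x i) * (y i - ⟪x i, β⟫)) (w (x i) * (y i - ⟪x i, β₀⟫)) := by
  rw [(hasGradientAt_robustLoss hℓ).gradient]
  simp only [robustLoss, bregmanDivergence, inner_neg_left, inner_smul_left, sum_inner,
    inner_sub_right, RCLike.conj_to_real]
  simp only [Finset.mul_sum, ← Finset.sum_sub_distrib, ← Finset.sum_neg_distrib]
  exact Finset.sum_congr rfl fun i _ ↦ by ring

end RobustLoss

theorem robustLoss_taylor_remainder_lower_bound_general {p : ℕ} (n : ℕ)
    (bM T α : ℝ) (hbM : 0 < bM)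
    (βs : EuclideanSpace ℝ (Fin p))
    (x : Fin n → EuclideanSpace ℝ (Fin p)) (ε : Fin n → ℝ)
    (y : Fin n → ℝ) (hy : ∀ i, y i = ⟪x i, βs⟫ + ε i)
    (w : EuclideanSpace ℝ (Fin p) → ℝ)
    (hw01 : ∀ v, 0 ≤ w v ∧ w v ≤ 1)
    (hwb : ∀ v, ‖w v • v‖ ≤ bM)
    (ℓ : ℝ → ℝ)
    (hℓ_conv : ConvexOn ℝ Set.univ ℓ)
    (hℓ_diff : ∀ u, DifferentiableAt ℝ ℓ u)
    (hℓ_curv : ∀ a b : ℝ, a ∈ Set.Icc (-T) T → b ∈ Set.Icc (-T) T →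
      α * (a - b) ^ 2 ≤ ℓ a - ℓ b - deriv ℓ b * (a - b)) :
    ∀ β : EuclideanSpace ℝ (Fin p), ‖β - βs‖ ≤ T / (2 * bM) →
      robustLoss n w ℓ x y β - robustLoss n w ℓ x y βs -
          ⟪gradient (robustLoss n w ℓ x y) βs, β - βs⟫ ≥
        (α / n) * ∑ i, w (x i) ^ 3 * ⟪x i, β - βs⟫ ^ 2 *
          (if |ε i| ≤ T / 2 then (1 : ℝ) else 0) := by
  intro β hβ
  rw [robustLoss_sub_sub_inner_gradient fun _ ↦ hℓ_diff _, ge_iff_le, div_eq_inv_mul, mul_assoc,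
    Finset.mul_sum _ _ α]
  refine mul_le_mul_of_nonneg_left (Finset.sum_le_sum fun i _ ↦ ?_) (by positivity)
  have hwt : |w (x i) * ⟪x i, β - βs⟫| ≤ T / 2 := by
    rw [← real_inner_smul_left]
    calc |⟪w (x i) • x i, β - βs⟫| ≤ ‖w (x i) • x i‖ * ‖β - βs‖ := abs_real_inner_le_norm _ _
      _ ≤ bM * (T / (2 * bM)) := mul_le_mul (hwb _) hβ (norm_nonneg _) hbM.le
      _ = T / 2 := by field_simp
  have hres₀ : y i - ⟪x i, βs⟫ = ε i := by rw [hy i]; ring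
  have hres : y i - ⟪x i, β⟫ = ε i - ⟪x i, β - βs⟫ := by rw [inner_sub_right, hy i]; ring
  rw [hres, hres₀]
  exact le_mul_bregmanDivergence hℓ_conv hℓ_curv (hℓ_diff _) (hw01 _).1 (hw01 _).2 hwt

/-- **Lower bound on the Taylor remainder of the robust empirical loss.**
If `ℓ` is convex, differentiable and has curvature `α` on `[-T, T]`, the weights satisfy
`0 ≤ w ≤ 1` and `‖w(x)x‖₂ ≤ b_M`, then for every `β` with `‖β - β*‖₂ ≤ T/(2b_M)`,
`L_n(β) - L_n(β*) - ∇L_n(β*)ᵀ(β - β*)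
  ≥ (α/n) ∑ᵢ w(xᵢ)³ (xᵢᵀ(β - β*))² 1{|εᵢ| ≤ T/2}`. -/
theorem robustLoss_taylor_remainder_lower_bound {p : ℕ} (n : ℕ) (hn : 1 ≤ n)
    (bM T α : ℝ) (hbM : 0 < bM) (hT : 0 < T) (hα : 0 ≤ α)
    (βs : EuclideanSpace ℝ (Fin p))
    (x : Fin n → EuclideanSpace ℝ (Fin p)) (ε : Fin n → ℝ)
    (y : Fin n → ℝ) (hy : ∀ i, y i = ⟪x i, βs⟫ + ε i)
    (w : EuclideanSpace ℝ (Fin p) → ℝ)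
    (hw01 : ∀ v, 0 ≤ w v ∧ w v ≤ 1)
    (hwb : ∀ v, ‖w v • v‖ ≤ bM)
    (ℓ : ℝ → ℝ)
    (hℓ_conv : ConvexOn ℝ Set.univ ℓ)
    (hℓ_diff : ∀ u, DifferentiableAt ℝ ℓ u)
    (hℓ_curv : ∀ a b : ℝ, a ∈ Set.Icc (-T) T → b ∈ Set.Icc (-T) T →
      α * (a - b) ^ 2 ≤ ℓ a - ℓ b - deriv ℓ b * (a - b)) :
    ∀ β : EuclideanSpace ℝ (Fin p), ‖β - βs‖ ≤ T / (2 * bM) →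
      robustLoss n w ℓ x y β - robustLoss n w ℓ x y βs -
          ⟪gradient (robustLoss n w ℓ x y) βs, β - βs⟫ ≥
        (α / n) * ∑ i, w (x i) ^ 3 * ⟪x i, β - βs⟫ ^ 2 *
          (if |ε i| ≤ T / 2 then (1 : ℝ) else 0) :=
  robustLoss_taylor_remainder_lower_bound_general n bM T α hbM βs x ε y hy w hw01 hwb ℓ hℓ_conv
    hℓ_diff hℓ_curv
end

section
/- Let B ∈ ℝ^{p×p} with spectral (operator) norm ‖B‖₂ < 1, let Σ : ℝ^p → ℝ^{p×p} be measurable, let η be a random vector in ℝ^p with E‖η‖₂ < ∞, and let R > 1 be such that ‖Σ(z)‖₂ · E‖η‖₂ ≤ ((1 − ‖B‖₂)/2)·‖z‖₂ whenever ‖z‖₂ > R. Then for every z ∈ ℝ^p with ‖z‖₂ > R, the drift function V(z) = 1 + ‖z‖₂ satisfies E[V(Bᵀz + Σ(z)η)] ≤ ((3 + ‖B‖₂)/4)·V(z), where (3 + ‖B‖₂)/4 < 1. -/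
open MeasureTheory

lemma norm_star_clm_aux {p : ℕ} (A : EuclideanSpace ℝ (Fin p) →L[ℝ] EuclideanSpace ℝ (Fin p)) :
    ‖star A‖ = ‖A‖ := by
  rw [ContinuousLinearMap.star_eq_adjoint]
  exact ContinuousLinearMap.adjoint.norm_map A

set_option maxHeartbeats 800000 in
set_option synthInstance.maxHeartbeats 400000 in
/-- **Drift (Foster–Lyapunov) condition for a VAR with weakly heteroskedastic noise.**
If `‖B‖₂ < 1` and `‖Σ(z)‖₂·E‖η‖₂ ≤ ((1-‖B‖₂)/2)‖z‖₂` whenever `‖z‖₂ > R > 1`, then the drift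
function `V(z) = 1 + ‖z‖₂` satisfies `E[V(Bᵀz + Σ(z)η)] ≤ ((3+‖B‖₂)/4)·V(z)` for `‖z‖₂ > R`,
with contraction factor `(3+‖B‖₂)/4 < 1`. -/
theorem var_weak_heteroskedastic_drift {Ω : Type*} [MeasurableSpace Ω] {p : ℕ}
    (μ : Measure Ω) [IsProbabilityMeasure μ]
    (B : Matrix (Fin p) (Fin p) ℝ)
    (hB : ‖Matrix.toEuclideanCLM (𝕜 := ℝ) B‖ < 1)
    (S : EuclideanSpace ℝ (Fin p) → Matrix (Fin p) (Fin p) ℝ)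
    (hS_meas : ∀ i j, Measurable fun z => S z i j)
    (η : Ω → EuclideanSpace ℝ (Fin p)) (hη_meas : Measurable η)
    (hη_int : Integrable (fun ω => ‖η ω‖) μ)
    (R : ℝ) (hR : 1 < R)
    (hweak : ∀ z : EuclideanSpace ℝ (Fin p), R < ‖z‖ →
      ‖Matrix.toEuclideanCLM (𝕜 := ℝ) (S z)‖ * (∫ ω, ‖η ω‖ ∂μ) ≤
        ((1 - ‖Matrix.toEuclideanCLM (𝕜 := ℝ) B‖) / 2) * ‖z‖) :
    (3 + ‖Matrix.toEuclideanCLM (𝕜 := ℝ) B‖) / 4 < 1 ∧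
    ∀ z : EuclideanSpace ℝ (Fin p), R < ‖z‖ →
      (∫ ω, (1 + ‖Matrix.toEuclideanCLM (𝕜 := ℝ) B.transpose z +
          Matrix.toEuclideanCLM (𝕜 := ℝ) (S z) (η ω)‖) ∂μ) ≤
        ((3 + ‖Matrix.toEuclideanCLM (𝕜 := ℝ) B‖) / 4) * (1 + ‖z‖) := by
  set b := ‖Matrix.toEuclideanCLM (𝕜 := ℝ) B‖ with hbdef
  have hb0 : 0 ≤ b := norm_nonneg _
  refine ⟨by linarith, ?_⟩
  intro z hz
  set A := Matrix.toEuclideanCLM (𝕜 := ℝ) (S z) with hAdef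
  set c := Matrix.toEuclideanCLM (𝕜 := ℝ) B.transpose z with hcdef
  have htrans : Matrix.toEuclideanCLM (𝕜 := ℝ) B.transpose
      = star (Matrix.toEuclideanCLM (𝕜 := ℝ) B) := by
    rw [← map_star]
    congr 1
  have hct : ‖c‖ ≤ b * ‖z‖ := by
    calc ‖c‖ ≤ ‖Matrix.toEuclideanCLM (𝕜 := ℝ) B.transpose‖ * ‖z‖ :=
          ContinuousLinearMap.le_opNorm _ _
      _ = b * ‖z‖ := by rw [htrans, norm_star_clm_aux]
  have hmeas : AEStronglyMeasurable (fun ω => ‖c + A (η ω)‖) μ :=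
    (measurable_const.add (A.continuous.measurable.comp hη_meas)).norm.aestronglyMeasurable
  have hbound : ∀ ω, ‖c + A (η ω)‖ ≤ ‖c‖ + ‖A‖ * ‖η ω‖ := by
    intro ω
    calc ‖c + A (η ω)‖ ≤ ‖c‖ + ‖A (η ω)‖ := norm_add_le _ _
      _ ≤ ‖c‖ + ‖A‖ * ‖η ω‖ := by gcongr; exact A.le_opNorm _
  have hgint : Integrable (fun ω => ‖c‖ + ‖A‖ * ‖η ω‖) μ :=
    (integrable_const _).add (hη_int.const_mul _)
  have hint : Integrable (fun ω => ‖c + A (η ω)‖) μ := by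
    refine hgint.mono' hmeas ?_
    filter_upwards with ω
    rw [norm_norm]
    exact hbound ω
  have hsplit : (∫ ω, (1 + ‖c + A (η ω)‖) ∂μ) = 1 + ∫ ω, ‖c + A (η ω)‖ ∂μ := by
    rw [integral_add (integrable_const 1) hint, integral_const]
    simp
  have hle : (∫ ω, ‖c + A (η ω)‖ ∂μ) ≤ ‖c‖ + ‖A‖ * ∫ ω, ‖η ω‖ ∂μ := by
    calc (∫ ω, ‖c + A (η ω)‖ ∂μ) ≤ ∫ ω, (‖c‖ + ‖A‖ * ‖η ω‖) ∂μ :=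
          integral_mono hint hgint hbound
      _ = ‖c‖ + ‖A‖ * ∫ ω, ‖η ω‖ ∂μ := by
          rw [integral_add (integrable_const _) (hη_int.const_mul _), integral_const,
            integral_const_mul]
          simp
  have hw := hweak z hz
  have hkey : (1 - b) * (‖z‖ - 1) ≥ 0 :=
    mul_nonneg (by linarith) (by linarith)
  rw [hsplit]
  linarith
end

section
/- Let β* ∈ ℝ^p be supported on a set S ⊆ {1,…,p} with |S| = s ≥ 1 (i.e. β*_j = 0 for all j ∉ S). Then every u ∈ ℝ^p satisfying ‖u‖₁/2 + ‖β*‖₁ − ‖β* + u‖₁ ≥ 0 obeys ‖u_{S^c}‖₁ ≤ 3‖u_S‖₁ and ‖u‖₁ ≤ 4√s·‖u‖₂, where u_S and u_{S^c} denote the restrictions of u to the coordinates in S and in its complement. -/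
/-- **Cone constraint and ℓ¹/ℓ² compatibility for the anti-concentration cone of an
`s`-sparse vector.** If `β*` is supported on `S` with `|S| = s ≥ 1`, then every `u` with
`‖u‖₁/2 + ‖β*‖₁ - ‖β* + u‖₁ ≥ 0` satisfies `‖u_{Sᶜ}‖₁ ≤ 3‖u_S‖₁` and `‖u‖₁ ≤ 4√s·‖u‖₂`. -/
theorem l1_cone_compatibility {p : ℕ} (βs : EuclideanSpace ℝ (Fin p))
    (S : Finset (Fin p)) (s : ℕ) (hs : S.card = s) (hs1 : 1 ≤ s)
    (hsupp : ∀ j ∉ S, βs j = 0) :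
    ∀ u : EuclideanSpace ℝ (Fin p),
      (∑ j, |u j|) / 2 + (∑ j, |βs j|) - (∑ j, |βs j + u j|) ≥ 0 →
        (∑ j ∈ Sᶜ, |u j|) ≤ 3 * ∑ j ∈ S, |u j| ∧
        (∑ j, |u j|) ≤ 4 * Real.sqrt s * ‖u‖ := by
  intro u hcone
  have hsplit : ∀ f : Fin p → ℝ, (∑ j, f j) = (∑ j ∈ S, f j) + ∑ j ∈ Sᶜ, f j := by
    intro f; rw [add_comm, Finset.sum_compl_add_sum]
  have hβc : (∑ j ∈ Sᶜ, |βs j|) = 0 := by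
    apply Finset.sum_eq_zero; intro j hj
    rw [hsupp j (Finset.mem_compl.mp hj), abs_zero]
  have hβuc : (∑ j ∈ Sᶜ, |βs j + u j|) = ∑ j ∈ Sᶜ, |u j| := by
    apply Finset.sum_congr rfl; intro j hj
    rw [hsupp j (Finset.mem_compl.mp hj), zero_add]
  have hβuS : (∑ j ∈ S, |βs j|) - (∑ j ∈ S, |u j|) ≤ ∑ j ∈ S, |βs j + u j| := by
    rw [← Finset.sum_sub_distrib]
    apply Finset.sum_le_sum; intro j _
    have := abs_sub_abs_le_abs_sub (βs j) (-(u j))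
    simpa [sub_neg_eq_add] using this
  have hcone' : (∑ j ∈ Sᶜ, |u j|) ≤ 3 * ∑ j ∈ S, |u j| := by
    rw [hsplit (fun j => |u j|), hsplit (fun j => |βs j|), hsplit (fun j => |βs j + u j|),
      hβc, hβuc] at hcone
    nlinarith [hβuS]
  refine ⟨hcone', ?_⟩
  have hCS : (∑ j ∈ S, |u j|) ≤ Real.sqrt s * ‖u‖ := by
    have h1 : (∑ j ∈ S, |u j|) ^ 2 ≤ (s : ℝ) * ∑ j ∈ S, |u j| ^ 2 := by
      have := sq_sum_le_card_mul_sum_sq (s := S) (f := fun j => |u j|)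
      rwa [hs] at this
    have h2 : (∑ j ∈ S, |u j| ^ 2) ≤ ∑ j, |u j| ^ 2 :=
      Finset.sum_le_sum_of_subset_of_nonneg (Finset.subset_univ S)
        (fun j _ _ => by positivity)
    have hnorm : ‖u‖ = Real.sqrt (∑ j, |u j| ^ 2) := by
      rw [EuclideanSpace.norm_eq]; simp [Real.norm_eq_abs]
    have hnn : (0:ℝ) ≤ ∑ j ∈ S, |u j| := Finset.sum_nonneg fun j _ => abs_nonneg _
    calc (∑ j ∈ S, |u j|) = Real.sqrt ((∑ j ∈ S, |u j|) ^ 2) := by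
          rw [Real.sqrt_sq hnn]
      _ ≤ Real.sqrt ((s : ℝ) * ∑ j, |u j| ^ 2) := by
          apply Real.sqrt_le_sqrt
          exact h1.trans (by nlinarith [show (0:ℝ) ≤ (s:ℝ) from Nat.cast_nonneg s])
      _ = Real.sqrt s * Real.sqrt (∑ j, |u j| ^ 2) := Real.sqrt_mul (Nat.cast_nonneg s) _
      _ = Real.sqrt s * ‖u‖ := by rw [hnorm]
  have : (∑ j, |u j|) ≤ 4 * ∑ j ∈ S, |u j| := by
    rw [hsplit (fun j => |u j|)]; linarith
  calc (∑ j, |u j|) ≤ 4 * ∑ j ∈ S, |u j| := this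
    _ ≤ 4 * (Real.sqrt s * ‖u‖) := by linarith
    _ = 4 * Real.sqrt s * ‖u‖ := by ring
end
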